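/- arXiv:1011.5642 — 3 statements merged into one kernel-verified Lean document; each statement's English description precedes it below -/
import Mathlib

section
/- In PG(4,q), let S be a hyperplane, X a point of S, and L a set of pairwise disjoint lines, none contained in S and none passing through X, with |L| < q^2. Then there exists a line through X not contained in S that is disjoint from every line of L. -/
open Submodule Module

private lemma ncard_biUnion_le' {α ι : Type*} (s : Finset ι) (f : ι → Set α) :
    (⋃ i ∈ s, f i).ncard ≤ ∑ i ∈ s, (f i).ncard := by
  classical
  induction s using Finset.induction with
  | empty => simp
  | @insert a s ha ih =>
    rw [Finset.set_biUnion_insert, Finset.sum_insert ha]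
    exact le_trans (Set.ncard_union_le _ _) (Nat.add_le_add_left ih _)

/-- In PG(4,q), let S be a hyperplane, X a point of S, and L a set of pairwise
disjoint lines, none contained in S and none passing through X, with |L| < q^2. Then there
exists a line through X not contained in S that is disjoint from every line of L. -/
theorem stmt0 (q : ℕ) (F : Type) [Field F] [Fintype F] (hF : Fintype.card F = q)
    (S : Submodule F (Fin 5 → F)) (hS : finrank F S = 4)
    (X : Submodule F (Fin 5 → F)) (hX : finrank F X = 1) (hXS : X ≤ S)
    (L : Set (Submodule F (Fin 5 → F)))
    (hline : ∀ ℓ ∈ L, finrank F ℓ = 2)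
    (hskew : ∀ ℓ₁ ∈ L, ∀ ℓ₂ ∈ L, ℓ₁ ≠ ℓ₂ → ℓ₁ ⊓ ℓ₂ = ⊥)
    (hnotS : ∀ ℓ ∈ L, ¬ ℓ ≤ S)
    (hnotX : ∀ ℓ ∈ L, ¬ X ≤ ℓ)
    (hcard : L.ncard < q ^ 2) :
    ∃ m : Submodule F (Fin 5 → F), finrank F m = 2 ∧ X ≤ m ∧ ¬ m ≤ S ∧
      ∀ ℓ ∈ L, m ⊓ ℓ = ⊥ := by
  classical
  have hq2 : 2 ≤ q := by rw [← hF]; exact Fintype.one_lt_card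
  have hV : finrank F (Fin 5 → F) = 5 := Module.finrank_fin_fun F
  have hncard : ∀ W : Submodule F (Fin 5 → F),
      (W : Set (Fin 5 → F)).ncard = q ^ finrank F W := by
    intro W
    have : Fintype ↥W := Fintype.ofFinite _
    rw [← Nat.card_coe_set_eq]
    show Nat.card W = _
    rw [Nat.card_eq_fintype_card, card_eq_pow_finrank (K := F), hF]
  -- X meets no line of L (even trivially)
  have hXinf : ∀ ℓ : Submodule F (Fin 5 → F), ¬ X ≤ ℓ → X ⊓ ℓ = ⊥ := by
    intro ℓ hl
    by_contra hne
    have hle : X ⊓ ℓ ≤ X := inf_le_left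
    have h1 : finrank F ↥(X ⊓ ℓ) ≤ 1 := hX ▸ Submodule.finrank_mono hle
    have h0 : finrank F ↥(X ⊓ ℓ) ≠ 0 := fun h0 => hne (Submodule.finrank_eq_zero.mp h0)
    have heq : finrank F ↥(X ⊓ ℓ) = finrank F X := by omega
    have := Submodule.eq_of_le_of_finrank_eq hle heq
    exact hl (this ▸ inf_le_right)
  have hplane : ∀ ℓ ∈ L, finrank F ↥(X ⊔ ℓ) = 3 := by
    intro ℓ hl
    have h := Submodule.finrank_sup_add_finrank_inf_eq X ℓ
    rw [hXinf ℓ (hnotX ℓ hl), finrank_bot, hX, hline ℓ hl] at h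
    omega
  have hsupS : ∀ ℓ ∈ L, (X ⊔ ℓ) ⊔ S = ⊤ := by
    intro ℓ hl
    have hlt : S < (X ⊔ ℓ) ⊔ S := by
      refine lt_of_le_of_ne le_sup_right ?_
      intro h
      exact hnotS ℓ hl (le_trans (le_sup_right.trans le_sup_left) h.symm.le)
    have h5 : 4 < finrank F ↥((X ⊔ ℓ) ⊔ S) := hS ▸ Submodule.finrank_lt_finrank_of_lt hlt
    have h5' : finrank F ↥((X ⊔ ℓ) ⊔ S) ≤ 5 := by
      have := Submodule.finrank_le ((X ⊔ ℓ) ⊔ S); omega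
    exact Submodule.eq_top_of_finrank_eq (by rw [hV]; omega)
  have hinfS : ∀ ℓ ∈ L, finrank F ↥((X ⊔ ℓ) ⊓ S) = 2 := by
    intro ℓ hl
    have h := Submodule.finrank_sup_add_finrank_inf_eq (X ⊔ ℓ) S
    rw [hsupS ℓ hl, finrank_top, hV, hplane ℓ hl, hS] at h
    omega
  -- the count of "bad" vectors attached to each line
  have hdiff : ∀ ℓ ∈ L,
      (((X ⊔ ℓ : Submodule F (Fin 5 → F)) : Set (Fin 5 → F)) \ (S : Set (Fin 5 → F))).ncard
        = q ^ 3 - q ^ 2 := by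
    intro ℓ hl
    have heq : ((X ⊔ ℓ : Submodule F (Fin 5 → F)) : Set (Fin 5 → F)) \ (S : Set (Fin 5 → F))
        = ((X ⊔ ℓ : Submodule F (Fin 5 → F)) : Set (Fin 5 → F))
          \ (((X ⊔ ℓ) ⊓ S : Submodule F (Fin 5 → F)) : Set (Fin 5 → F)) := by
      ext v
      simp only [Set.mem_diff, SetLike.mem_coe, Submodule.mem_inf]
      tauto
    rw [heq, Set.ncard_diff (by intro v hv; exact (Submodule.mem_inf.mp hv).1),
      hncard, hncard, hplane ℓ hl, hinfS ℓ hl]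
  have hLfin : L.Finite := Set.toFinite L
  set Bad : Set (Fin 5 → F) :=
    (S : Set (Fin 5 → F)) ∪ ⋃ ℓ ∈ hLfin.toFinset,
      (((X ⊔ ℓ : Submodule F (Fin 5 → F)) : Set (Fin 5 → F)) \ (S : Set (Fin 5 → F)))
    with hBaddef
  have hBadcard : Bad.ncard < q ^ 5 := by
    have h1 : Bad.ncard ≤ q ^ 4 + L.ncard * (q ^ 3 - q ^ 2) := by
      refine le_trans (Set.ncard_union_le _ _) ?_
      have h2 : (⋃ ℓ ∈ hLfin.toFinset,
          (((X ⊔ ℓ : Submodule F (Fin 5 → F)) : Set (Fin 5 → F)) \ (S : Set (Fin 5 → F)))).ncard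
          ≤ L.ncard * (q ^ 3 - q ^ 2) := by
        refine le_trans (ncard_biUnion_le' _ _) ?_
        rw [Finset.sum_congr rfl (fun ℓ hm => hdiff ℓ (hLfin.mem_toFinset.mp hm)),
          Finset.sum_const, smul_eq_mul, Set.ncard_eq_toFinset_card L hLfin]
      have h3 := hncard S
      rw [hS] at h3
      omega
    have ha : 0 < q ^ 3 - q ^ 2 := by
      have : q ^ 2 < q ^ 3 := Nat.pow_lt_pow_right (by omega) (by omega)
      omega
    have key : q ^ 2 * (q ^ 3 - q ^ 2) + q ^ 4 = q ^ 5 := by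
      have : q ^ 2 ≤ q ^ 3 := Nat.pow_le_pow_right (by omega) (by omega)
      rw [Nat.mul_sub]
      have h1 : q ^ 2 * q ^ 3 = q ^ 5 := by ring
      have h2 : q ^ 2 * q ^ 2 = q ^ 4 := by ring
      rw [h1, h2]
      have h4 : q ^ 4 ≤ q ^ 5 := Nat.pow_le_pow_right (by omega) (by omega)
      omega
    have hlt : L.ncard * (q ^ 3 - q ^ 2) < q ^ 2 * (q ^ 3 - q ^ 2) :=
      Nat.mul_lt_mul_of_lt_of_le hcard le_rfl ha
    linarith
  have huniv : (Set.univ : Set (Fin 5 → F)).ncard = q ^ 5 := by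
    rw [Set.ncard_univ, Nat.card_eq_fintype_card, card_eq_pow_finrank (K := F), hF, hV]
  obtain ⟨y, hy⟩ : ∃ y, y ∉ Bad := by
    by_contra h
    push_neg at h
    rw [Set.eq_univ_of_forall h, huniv] at hBadcard
    exact lt_irrefl _ hBadcard
  have hyS : y ∉ S := fun h => hy (Or.inl h)
  have hyP : ∀ ℓ ∈ L, y ∉ (X ⊔ ℓ) := by
    intro ℓ hl h
    refine hy (Or.inr ?_)
    exact Set.mem_biUnion (hLfin.mem_toFinset.mpr hl) ⟨h, hyS⟩
  have hy0 : y ≠ 0 := fun h => hyS (h ▸ S.zero_mem)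
  have hyX : y ∉ X := fun h => hyS (hXS h)
  have hinf : X ⊓ (F ∙ y) = ⊥ :=
    disjoint_iff.mp ((Submodule.disjoint_span_singleton' hy0).mpr hyX)
  refine ⟨X ⊔ (F ∙ y), ?_, le_sup_left, ?_, ?_⟩
  · have h := Submodule.finrank_sup_add_finrank_inf_eq X (F ∙ y)
    rw [hinf, finrank_bot, hX, finrank_span_singleton hy0] at h
    omega
  · intro h
    exact hyS (h (Submodule.mem_sup_right (Submodule.mem_span_singleton_self y)))
  · intro ℓ hl
    rw [eq_bot_iff]
    intro v hv
    obtain ⟨hvm, hvl⟩ := Submodule.mem_inf.mp hv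
    obtain ⟨x, hx, z, hz, rfl⟩ := Submodule.mem_sup.mp hvm
    obtain ⟨c, rfl⟩ := Submodule.mem_span_singleton.mp hz
    by_cases hc : c = 0
    · subst hc
      rw [zero_smul, add_zero] at hvl ⊢
      have : x ∈ X ⊓ ℓ := Submodule.mem_inf.mpr ⟨hx, hvl⟩
      rw [hXinf ℓ (hnotX ℓ hl)] at this
      exact this
    · exfalso
      apply hyP ℓ hl
      have h1 : x + c • y ∈ X ⊔ ℓ := Submodule.mem_sup_right hvl
      have h2 : x ∈ X ⊔ ℓ := Submodule.mem_sup_left hx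
      have h3 : c • y ∈ X ⊔ ℓ := by
        have := Submodule.sub_mem _ h1 h2
        simpa using this
      have := Submodule.smul_mem _ c⁻¹ h3
      rwa [smul_smul, inv_mul_cancel₀ hc, one_smul] at this
end

section
/- Let F be a spread of a hyperplane S of PG(4,q) (a set of q^2+1 pairwise skew lines partitioning the points of S). Let r ∈ F, and let M be a set of q+1 pairwise skew lines of PG(4,q), none contained in S, each meeting r, such that each line of M is disjoint from every line of F \ {r}. Then (F \ {r}) ∪ M is a maximal partial spread of PG(4,q) of size q^2+q+1. -/
/-!
Every line of PG(4,q) meets the hyperplane `S`, so a partial spread covering the points of `S` is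
maximal. Removing `r` from the spread of `S` uncovers only the `q + 1` points of `r`; the `q + 1`
pairwise skew lines of `M` meet `r` in `q + 1` distinct points, and their `(q + 1)(q - 1)` nonzero
vectors are all `q ^ 2 - 1` nonzero vectors of `r`.
-/

open Submodule Module

/-- A partial spread of PG(4,q): a set of pairwise disjoint (skew) lines. -/
def IsPartialSpread (F : Type) [Field F] (L : Set (Submodule F (Fin 5 → F))) : Prop :=
  (∀ ℓ ∈ L, Module.finrank F ℓ = 2) ∧
  ∀ ℓ₁ ∈ L, ∀ ℓ₂ ∈ L, ℓ₁ ≠ ℓ₂ → ℓ₁ ⊓ ℓ₂ = ⊥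

/-- A maximal partial spread: no further line can be added. -/
def IsMaximalPartialSpread (F : Type) [Field F] (L : Set (Submodule F (Fin 5 → F))) : Prop :=
  IsPartialSpread F L ∧
  ∀ m : Submodule F (Fin 5 → F), Module.finrank F m = 2 → m ∉ L → ∃ ℓ ∈ L, m ⊓ ℓ ≠ ⊥

namespace Submodule

variable {K V : Type*} [DivisionRing K] [AddCommGroup V] [Module K V]

theorem ncard_sdiff_zero (p : Submodule K V) [Module.Finite K p] :
    ((p : Set V) \ {0}).ncard = Nat.card K ^ finrank K p - 1 := by
  rw [Set.ncard_sdiff_singleton_of_mem p.zero_mem, ← Nat.card_coe_set_eq,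
    SetLike.coe_sort_coe, natCard_eq_pow_finrank (K := K)]

theorem exists_mem_of_sum_card_eq [Finite K] [FiniteDimensional K V] {ι : Type*}
    (s : Finset ι) (p : ι → Submodule K V) (W : Submodule K V) (hle : ∀ i ∈ s, p i ≤ W)
    (hdisj : (s : Set ι).Pairwise fun i j => p i ⊓ p j = ⊥)
    (hsum : ∑ i ∈ s, (Nat.card K ^ finrank K (p i) - 1) = Nat.card K ^ finrank K W - 1)
    {v : V} (hv : v ∈ W) (hv0 : v ≠ 0) : ∃ i ∈ s, v ∈ p i := by
  have : Finite V := Module.finite_of_finite K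
  have hsub : ⋃ i ∈ s, ((p i : Set V) \ {0}) ⊆ (W : Set V) \ {0} :=
    Set.iUnion₂_subset fun i hi => Set.sdiff_subset_sdiff_left (hle i hi)
  have hpd : (s : Set ι).PairwiseDisjoint fun i => (p i : Set V) \ {0} := by
    refine fun i hi j hj hij => Set.disjoint_left.2 fun x hxi hxj => hxi.2 ?_
    have hx : x ∈ p i ⊓ p j := ⟨hxi.1, hxj.1⟩
    rwa [hdisj hi hj hij] at hx
  have hcard : ((W : Set V) \ {0}).ncard ≤ (⋃ i ∈ s, ((p i : Set V) \ {0})).ncard := by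
    have hU := s.finite_toSet.ncard_biUnion (fun _ _ => Set.toFinite _) hpd
    rw [finsum_mem_coe_finset] at hU
    simp only [Finset.mem_coe, ncard_sdiff_zero] at hU
    rw [hU, hsum, W.ncard_sdiff_zero]
  have hvU : v ∈ ⋃ i ∈ s, ((p i : Set V) \ {0}) := by
    rw [Set.eq_of_subset_of_ncard_le hsub hcard]
    exact ⟨hv, hv0⟩
  simp only [Set.mem_iUnion] at hvU
  obtain ⟨i, hi, hvi, -⟩ := hvU
  exact ⟨i, hi, hvi⟩

theorem finrank_inf_eq_one {ℓ r : Submodule K V} [FiniteDimensional K ℓ]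
    (hℓ : finrank K ℓ = 2) (hmeet : ℓ ⊓ r ≠ ⊥) (hnle : ¬ ℓ ≤ r) : finrank K ↥(ℓ ⊓ r) = 1 := by
  have hpos : finrank K ↥(ℓ ⊓ r) ≠ 0 := fun h => hmeet (finrank_eq_zero.mp h)
  have hlt : finrank K ↥(ℓ ⊓ r) < finrank K ℓ :=
    finrank_lt_finrank_of_lt (inf_le_left.lt_of_ne fun h => hnle (h ▸ inf_le_right))
  omega

theorem exists_mem_of_ncard_eq_card_add_one [Finite K] [FiniteDimensional K V]
    {r : Submodule K V} (hr : finrank K r = 2) {M : Set (Submodule K V)}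
    (hM : M.ncard = Nat.card K + 1) (hskew : ∀ ℓ₁ ∈ M, ∀ ℓ₂ ∈ M, ℓ₁ ≠ ℓ₂ → ℓ₁ ⊓ ℓ₂ = ⊥)
    (hpt : ∀ ℓ ∈ M, finrank K ↥(ℓ ⊓ r) = 1) {v : V} (hv : v ∈ r) (hv0 : v ≠ 0) :
    ∃ ℓ ∈ M, v ∈ ℓ := by
  have hMfin : M.Finite := Set.finite_of_ncard_ne_zero (by omega)
  have hsum : ∑ ℓ ∈ hMfin.toFinset, (Nat.card K ^ finrank K ↥(ℓ ⊓ r) - 1) =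
      Nat.card K ^ finrank K r - 1 := by
    rw [Finset.sum_congr rfl fun ℓ hℓ => by rw [hpt ℓ (hMfin.mem_toFinset.mp hℓ)],
      Finset.sum_const, ← Set.ncard_eq_toFinset_card M hMfin, hM, hr, pow_one, smul_eq_mul]
    simpa using (Nat.sq_sub_sq (Nat.card K) 1).symm
  have hdisj : (hMfin.toFinset : Set (Submodule K V)).Pairwise
      fun ℓ₁ ℓ₂ => ℓ₁ ⊓ r ⊓ (ℓ₂ ⊓ r) = ⊥ := by
    intro ℓ₁ h₁ ℓ₂ h₂ hne
    rw [Set.Finite.coe_toFinset] at h₁ h₂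
    exact eq_bot_iff.2 fun x hx => (hskew ℓ₁ h₁ ℓ₂ h₂ hne).le ⟨hx.1.1, hx.2.1⟩
  obtain ⟨ℓ, hℓ, hvℓ⟩ := exists_mem_of_sum_card_eq hMfin.toFinset (· ⊓ r) r
    (fun _ _ => inf_le_right) hdisj hsum hv hv0
  exact ⟨ℓ, hMfin.mem_toFinset.mp hℓ, hvℓ.1⟩

theorem inf_ne_bot_of_finrank_lt [FiniteDimensional K V] {m S : Submodule K V}
    (h : finrank K V < finrank K m + finrank K S) : m ⊓ S ≠ ⊥ := fun hbot =>
  (finrank_add_finrank_le_of_disjoint (disjoint_iff.2 hbot)).not_gt h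

end Submodule

theorem IsPartialSpread.union {F : Type} [Field F] {A B : Set (Submodule F (Fin 5 → F))}
    (hA : IsPartialSpread F A) (hB : IsPartialSpread F B) (hAB : ∀ a ∈ A, ∀ b ∈ B, a ⊓ b = ⊥) :
    IsPartialSpread F (A ∪ B) := by
  refine ⟨fun ℓ hℓ => hℓ.elim (hA.1 ℓ) (hB.1 ℓ), ?_⟩
  rintro ℓ₁ (h₁ | h₁) ℓ₂ (h₂ | h₂) hne
  · exact hA.2 ℓ₁ h₁ ℓ₂ h₂ hne
  · exact hAB ℓ₁ h₁ ℓ₂ h₂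
  · exact inf_comm ℓ₁ ℓ₂ ▸ hAB ℓ₂ h₂ ℓ₁ h₁
  · exact hB.2 ℓ₁ h₁ ℓ₂ h₂ hne

theorem IsPartialSpread.isMaximalPartialSpread_of_covers {F : Type} [Field F]
    {L : Set (Submodule F (Fin 5 → F))} (hL : IsPartialSpread F L) {S : Submodule F (Fin 5 → F)}
    (hS : finrank F S = 4) (hcover : ∀ v ∈ S, v ≠ 0 → ∃ ℓ ∈ L, v ∈ ℓ) :
    IsMaximalPartialSpread F L := by
  refine ⟨hL, fun m hm _ => ?_⟩
  obtain ⟨v, hv, hv0⟩ := (Submodule.ne_bot_iff _).1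
    (Submodule.inf_ne_bot_of_finrank_lt (m := m) (S := S) (by simp [hm, hS]))
  obtain ⟨ℓ, hℓ, hvℓ⟩ := hcover v hv.2 hv0
  exact ⟨ℓ, hℓ, (Submodule.ne_bot_iff _).2 ⟨v, ⟨hv.1, hvℓ⟩, hv0⟩⟩

/-- Let F be a spread of a hyperplane S of PG(4,q). Let r ∈ F, and M a set of
q+1 pairwise skew lines, none in S, each meeting r, each disjoint from every line of F \ {r}.
Then (F \ {r}) ∪ M is a maximal partial spread of PG(4,q) of size q^2+q+1. -/
theorem stmt4 (q : ℕ) (F : Type) [Field F] [Fintype F] (hF : Fintype.card F = q)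
    (S : Submodule F (Fin 5 → F)) (hS : finrank F S = 4)
    (Fs : Set (Submodule F (Fin 5 → F)))
    (hFsline : ∀ ℓ ∈ Fs, finrank F ℓ = 2) (hFsS : ∀ ℓ ∈ Fs, ℓ ≤ S)
    (hFsskew : ∀ ℓ₁ ∈ Fs, ∀ ℓ₂ ∈ Fs, ℓ₁ ≠ ℓ₂ → ℓ₁ ⊓ ℓ₂ = ⊥)
    (hFscover : ∀ v ∈ S, v ≠ 0 → ∃ ℓ ∈ Fs, v ∈ ℓ)
    (hFscard : Fs.ncard = q ^ 2 + 1)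
    (r : Submodule F (Fin 5 → F)) (hrFs : r ∈ Fs)
    (M : Set (Submodule F (Fin 5 → F))) (hMcard : M.ncard = q + 1)
    (hMline : ∀ ℓ ∈ M, finrank F ℓ = 2)
    (hMskew : ∀ ℓ₁ ∈ M, ∀ ℓ₂ ∈ M, ℓ₁ ≠ ℓ₂ → ℓ₁ ⊓ ℓ₂ = ⊥)
    (hMnotS : ∀ ℓ ∈ M, ¬ ℓ ≤ S)
    (hMmeet : ∀ ℓ ∈ M, ℓ ⊓ r ≠ ⊥)
    (hMdisj : ∀ ℓ ∈ M, ∀ ℓ' ∈ Fs \ {r}, ℓ ⊓ ℓ' = ⊥) :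
    IsMaximalPartialSpread F ((Fs \ {r}) ∪ M) ∧
    ((Fs \ {r}) ∪ M).ncard = q ^ 2 + q + 1 := by
  have hpt : ∀ ℓ ∈ M, finrank F ↥(ℓ ⊓ r) = 1 := fun ℓ hℓ =>
    finrank_inf_eq_one (hMline ℓ hℓ) (hMmeet ℓ hℓ) fun h => hMnotS ℓ hℓ (h.trans (hFsS r hrFs))
  have hspread : IsPartialSpread F ((Fs \ {r}) ∪ M) :=
    IsPartialSpread.union ⟨fun ℓ hℓ => hFsline ℓ hℓ.1, fun ℓ₁ h₁ ℓ₂ h₂ => hFsskew ℓ₁ h₁.1 ℓ₂ h₂.1⟩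
      ⟨hMline, hMskew⟩ fun ℓ' hℓ' ℓ hℓ => inf_comm ℓ ℓ' ▸ hMdisj ℓ hℓ ℓ' hℓ'
  have hcover : ∀ v ∈ S, v ≠ 0 → ∃ ℓ ∈ (Fs \ {r}) ∪ M, v ∈ ℓ := by
    intro v hv hv0
    obtain ⟨ℓ, hℓ, hvℓ⟩ := hFscover v hv hv0
    by_cases hℓr : ℓ = r
    · obtain ⟨ℓ', hℓ', hvℓ'⟩ := exists_mem_of_ncard_eq_card_add_one (hFsline r hrFs)
        (by rw [Nat.card_eq_fintype_card, hF, hMcard]) hMskew hpt (hℓr ▸ hvℓ) hv0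
      exact ⟨ℓ', .inr hℓ', hvℓ'⟩
    · exact ⟨ℓ, .inl ⟨hℓ, hℓr⟩, hvℓ⟩
  have hdisj : Disjoint (Fs \ {r}) M :=
    Set.disjoint_left.2 fun ℓ hℓ hℓM => hMnotS ℓ hℓM (hFsS ℓ hℓ.1)
  refine ⟨hspread.isMaximalPartialSpread_of_covers hS hcover, ?_⟩
  rw [Set.ncard_union_eq hdisj (Set.finite_of_ncard_ne_zero (by omega) : Fs.Finite).sdiff
      (Set.finite_of_ncard_ne_zero (by omega)), Set.ncard_sdiff_singleton_of_mem hrFs, hFscard,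
    hMcard]
  omega
end

section
/- In PG(4,q), let r be a line contained in a hyperplane S. Then there exist q+1 pairwise skew lines, none contained in S, whose union contains r (i.e., covering all q+1 points of r). -/
open Submodule Module

lemma span_pair_finrank_two {F : Type} [Field F] {V : Type} [AddCommGroup V] [Module F V]
    (x y : V) (h : ∀ a b : F, a • x + b • y = 0 → a = 0 ∧ b = 0) :
    finrank F (Submodule.span F {x, y} : Submodule F V) = 2 := by
  have hli : LinearIndependent F ![x, y] := LinearIndependent.pair_iff.mpr h
  have := finrank_span_eq_card hli
  rw [show Set.range ![x,y] = {x, y} by ext z; simp [Fin.exists_fin_two, or_comm]] at this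
  exact this

/-- In PG(4,q), let r be a line contained in a hyperplane S. Then there exist
q+1 pairwise skew lines, none contained in S, whose union contains r. -/
theorem stmt14 (q : ℕ) (F : Type) [Field F] [Fintype F] (hF : Fintype.card F = q)
    (S : Submodule F (Fin 5 → F)) (hS : finrank F S = 4)
    (r : Submodule F (Fin 5 → F)) (hr : finrank F r = 2) (hrS : r ≤ S) :
    ∃ M : Set (Submodule F (Fin 5 → F)), M.ncard = q + 1 ∧
      (∀ ℓ ∈ M, finrank F ℓ = 2) ∧
      (∀ ℓ₁ ∈ M, ∀ ℓ₂ ∈ M, ℓ₁ ≠ ℓ₂ → ℓ₁ ⊓ ℓ₂ = ⊥) ∧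
      (∀ ℓ ∈ M, ¬ ℓ ≤ S) ∧
      (∀ v ∈ r, v ≠ 0 → ∃ ℓ ∈ M, v ∈ ℓ) := by
  classical
  have hfull : finrank F (Fin 5 → F) = 5 := by simp
  -- basis of r
  let b : Basis (Fin 2) F r := finBasisOfFinrankEq F r hr
  set e₀ : Fin 5 → F := (b 0 : Fin 5 → F) with he₀
  set e₁ : Fin 5 → F := (b 1 : Fin 5 → F) with he₁
  have he₀r : e₀ ∈ r := (b 0).2
  have he₁r : e₁ ∈ r := (b 1).2
  -- fact A : independence of e₀ e₁
  have hA : ∀ a c : F, a • e₀ + c • e₁ = 0 → a = 0 ∧ c = 0 := by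
    intro a c hac
    have h0 : a • b 0 + c • b 1 = 0 := by
      apply Subtype.coe_injective
      push_cast
      exact hac
    have hli : LinearIndependent F (fun i => b i) := b.linearIndependent
    have := Fintype.linearIndependent_iff.mp hli ![a, c]
      (by simp only [Fin.sum_univ_two, Matrix.cons_val_zero, Matrix.cons_val_one, Matrix.head_cons]; exact h0)
    exact ⟨this 0, this 1⟩
  -- fact B : every element of r is a combination
  have hB : ∀ v ∈ r, ∃ a c : F, v = a • e₀ + c • e₁ := by
    intro v hv
    refine ⟨b.repr ⟨v, hv⟩ 0, b.repr ⟨v, hv⟩ 1, ?_⟩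
    have h1 := b.sum_repr ⟨v, hv⟩
    rw [Fin.sum_univ_two] at h1
    have h2 := congrArg (fun x : r => (x : Fin 5 → F)) h1
    simp only [Submodule.coe_add, SetLike.val_smul] at h2
    exact h2.symm
  -- pick g ∈ S \ r
  have hrltS : r < S := lt_of_le_of_ne hrS (by intro h; rw [h, hS] at hr; omega)
  obtain ⟨g, hgS, hgr⟩ := SetLike.exists_of_lt hrltS
  -- pick h ∈ S \ (r ⊔ span {g})
  have hr'le : r ⊔ Submodule.span F {g} ≤ S := by
    refine sup_le hrS ?_
    rw [Submodule.span_le]; simpa using hgS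
  have hr'lt : r ⊔ Submodule.span F {g} < S := by
    refine lt_of_le_of_ne hr'le ?_
    intro hEq
    have h1 : finrank F ↥(r ⊔ Submodule.span F {g}) ≤ 3 := by
      have := Submodule.finrank_add_le_finrank_add_finrank r (Submodule.span F {g})
      have h2 : finrank F (Submodule.span F {g} : Submodule F (Fin 5 → F)) ≤ 1 :=
        finrank_span_le_card ({g} : Set (Fin 5 → F)) |>.trans (by simp)
      omega
    rw [hEq, hS] at h1; omega
  obtain ⟨h, hhS, hh⟩ := SetLike.exists_of_lt hr'lt
  -- pick w ∉ S
  have hSlt : S < ⊤ := lt_of_le_of_ne le_top (by intro hEq; rw [hEq] at hS; simp [finrank_top, hfull] at hS)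
  obtain ⟨w, -, hwS⟩ := SetLike.exists_of_lt hSlt
  -- the q+1 representative points of r and their translation vectors
  let p : Option F → (Fin 5 → F) := fun i => i.elim e₁ fun t => e₀ + t • e₁
  let u : Option F → (Fin 5 → F) := fun i => i.elim h fun t => g + t • h
  have hpnone : p none = e₁ := rfl
  have hpsome : ∀ t : F, p (some t) = e₀ + t • e₁ := fun _ => rfl
  have hunone : u none = h := rfl
  have husome : ∀ t : F, u (some t) = g + t • h := fun _ => rfl
  have hpr : ∀ i, p i ∈ r := by
    intro i; cases i with
    | none => exact he₁r
    | some t => exact add_mem he₀r (Submodule.smul_mem _ _ he₁r)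
  have huS : ∀ i, u i ∈ S := by
    intro i; cases i with
    | none => exact hhS
    | some t => exact add_mem hgS (Submodule.smul_mem _ _ hhS)
  have hp0 : ∀ i, p i ≠ 0 := by
    intro i; cases i with
    | none =>
      intro h0
      exact one_ne_zero ((hA 0 1 (by rw [hpnone] at h0; simp [h0])).2)
    | some t =>
      intro h0
      refine one_ne_zero ((hA 1 t ?_).1)
      rw [hpsome] at h0; simpa using h0
  -- independence of distinct representative points
  have hpind : ∀ i j, i ≠ j → ∀ a c : F, a • p i + c • p j = 0 → a = 0 ∧ c = 0 := by
    intro i j hij a c hac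
    cases i with
    | none =>
      cases j with
      | none => exact absurd rfl hij
      | some t =>
        rw [hpnone, hpsome] at hac
        have h2 : c • e₀ + (a + c * t) • e₁ = 0 := by
          linear_combination (norm := module) hac
        obtain ⟨hc, hs⟩ := hA _ _ h2
        refine ⟨?_, hc⟩
        rw [hc, zero_mul, add_zero] at hs; exact hs
    | some t =>
      cases j with
      | none =>
        rw [hpnone, hpsome] at hac
        have h2 : a • e₀ + (a * t + c) • e₁ = 0 := by
          linear_combination (norm := module) hac
        obtain ⟨ha, hs⟩ := hA _ _ h2
        refine ⟨ha, ?_⟩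
        rw [ha, zero_mul, zero_add] at hs; exact hs
      | some s =>
        have hts : t ≠ s := fun hEq => hij (by rw [hEq])
        rw [hpsome, hpsome] at hac
        have h2 : (a + c) • e₀ + (a * t + c * s) • e₁ = 0 := by
          linear_combination (norm := module) hac
        obtain ⟨h3, h4⟩ := hA _ _ h2
        have hc : c = -a := by linear_combination h3
        rw [hc, neg_mul] at h4
        have ha : a * (t - s) = 0 := by linear_combination h4
        have ha0 : a = 0 := by
          rcases mul_eq_zero.mp ha with h' | h'
          · exact h'
          · exact absurd (sub_eq_zero.mp h') hts
        constructor
        · exact ha0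
        · rw [hc, ha0, neg_zero]
  -- a nonzero combination of g and h is not in r
  have hgh : ∀ α β : F, ¬(α = 0 ∧ β = 0) → α • g + β • h ∉ r := by
    intro α β hne hmem
    by_cases hβ : β = 0
    · have hα : α ≠ 0 := fun h' => hne ⟨h', hβ⟩
      rw [hβ, zero_smul, add_zero] at hmem
      exact hgr (by simpa [smul_smul, inv_mul_cancel₀ hα] using Submodule.smul_mem r α⁻¹ hmem)
    · apply hh
      have h1 : α • g + β • h ∈ r ⊔ Submodule.span F {g} := le_sup_left (a := r) hmem
      have h2 : α • g ∈ r ⊔ Submodule.span F {g} :=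
        le_sup_right (a := r) (Submodule.smul_mem _ _ (Submodule.mem_span_singleton_self g))
      have h3 : β • h ∈ r ⊔ Submodule.span F {g} := by
        have := sub_mem h1 h2; simpa using this
      simpa [smul_smul, inv_mul_cancel₀ hβ] using
        Submodule.smul_mem (r ⊔ Submodule.span F {g}) β⁻¹ h3
  -- differences of translation vectors avoid r
  have hud : ∀ i j, i ≠ j → u i - u j ∉ r := by
    intro i j hij
    cases i with
    | none =>
      cases j with
      | none => exact absurd rfl hij
      | some t =>
        rw [hunone, husome]
        have : h - (g + t • h) = (-1 : F) • g + (1 - t) • h := by module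
        rw [this]
        exact hgh _ _ (fun hc => by simpa using hc.1)
    | some t =>
      cases j with
      | none =>
        rw [hunone, husome]
        have : (g + t • h) - h = (1 : F) • g + (t - 1) • h := by module
        rw [this]
        exact hgh _ _ (fun hc => one_ne_zero hc.1)
      | some s =>
        have hts : t ≠ s := fun hEq => hij (by rw [hEq])
        rw [husome, husome]
        have : (g + t • h) - (g + s • h) = (0 : F) • g + (t - s) • h := by module
        rw [this]
        exact hgh _ _ (fun hc => hts (sub_eq_zero.mp hc.2))
  -- scalars killing w against S
  have hwc : ∀ (c : F) (x : Fin 5 → F), x ∈ S → c • w = x → c = 0 := by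
    intro c x hx hcx
    by_contra hc
    apply hwS
    have : w = c⁻¹ • x := by rw [← hcx, smul_smul, inv_mul_cancel₀ hc, one_smul]
    rw [this]; exact Submodule.smul_mem _ _ hx
  -- the lines
  let L : Option F → Submodule F (Fin 5 → F) := fun i => Submodule.span F {p i, w + u i}
  have hLdef : ∀ i, L i = Submodule.span F {p i, w + u i} := fun _ => rfl
  have hLind : ∀ i, ∀ a c : F, a • p i + c • (w + u i) = 0 → a = 0 ∧ c = 0 := by
    intro i a c hac
    have hw1 : c • w = -(a • p i) - c • u i := by
      linear_combination (norm := module) hac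
    have hc : c = 0 :=
      hwc c _ (sub_mem (neg_mem (Submodule.smul_mem _ _ (hrS (hpr i))))
        (Submodule.smul_mem _ _ (huS i))) hw1
    refine ⟨?_, hc⟩
    rw [hc, zero_smul, add_zero] at hac
    exact (smul_eq_zero.mp hac).resolve_right (hp0 i)
  have hdim : ∀ i, finrank F (L i) = 2 := fun i =>
    span_pair_finrank_two _ _ (hLind i)
  have hskew : ∀ i j, i ≠ j → L i ⊓ L j = ⊥ := by
    intro i j hij
    rw [eq_bot_iff]
    rintro v ⟨hv1, hv2⟩
    obtain ⟨a, c, hac⟩ := Submodule.mem_span_pair.mp hv1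
    obtain ⟨a', c', hac'⟩ := Submodule.mem_span_pair.mp hv2
    have hw1 : (c - c') • w = a' • p j + c' • u j - a • p i - c • u i := by
      linear_combination (norm := module) hac - hac'
    have hcc : c - c' = 0 :=
      hwc _ _ (sub_mem (sub_mem (add_mem (Submodule.smul_mem _ _ (hrS (hpr j)))
        (Submodule.smul_mem _ _ (huS j))) (Submodule.smul_mem _ _ (hrS (hpr i))))
        (Submodule.smul_mem _ _ (huS i))) hw1
    have hc'c : c' = c := (sub_eq_zero.mp hcc).symm
    subst hc'c
    by_cases hc0 : c' = 0
    · subst hc0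
      rw [zero_smul, add_zero] at hac hac'
      have h0 : a • p i + (-a') • p j = 0 := by
        rw [hac, neg_smul, hac', add_neg_cancel]
      have ha0 := (hpind i j hij a (-a') h0).1
      show v = 0
      rw [← hac, ha0, zero_smul]
    · exfalso
      apply hud i j hij
      have hru : c' • (u i - u j) = a' • p j - a • p i := by
        linear_combination (norm := module) hac - hac'
      have hmem : c' • (u i - u j) ∈ r := by
        rw [hru]
        exact sub_mem (Submodule.smul_mem _ _ (hpr j)) (Submodule.smul_mem _ _ (hpr i))
      simpa [smul_smul, inv_mul_cancel₀ hc0] using Submodule.smul_mem r c'⁻¹ hmem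
  have hLinj : Function.Injective L := by
    intro i j hLij
    by_contra hne
    have hb := hskew i j hne
    rw [hLij, inf_idem] at hb
    have := hdim j
    rw [hb] at this
    simp at this
  refine ⟨Set.range L, ?_, ?_, ?_, ?_, ?_⟩
  · rw [← Nat.card_coe_set_eq, Nat.card_range_of_injective hLinj]
    simp [Nat.card_eq_fintype_card, hF]
  · rintro ℓ ⟨i, rfl⟩
    exact hdim i
  · rintro ℓ₁ ⟨i, rfl⟩ ℓ₂ ⟨j, rfl⟩ hne
    exact hskew i j (fun hEq => hne (by rw [hEq]))
  · rintro ℓ ⟨i, rfl⟩ hle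
    apply hwS
    have hmem : w + u i ∈ L i := Submodule.mem_span_pair.mpr ⟨0, 1, by simp⟩
    have : w + u i ∈ S := hle hmem
    simpa using sub_mem this (huS i)
  · intro v hv hv0
    obtain ⟨a, c, hac⟩ := hB v hv
    by_cases ha : a = 0
    · have hc : c ≠ 0 := by
        intro hc; apply hv0; rw [hac, ha, hc, zero_smul, zero_smul, add_zero]
      refine ⟨L none, ⟨none, rfl⟩, ?_⟩
      refine Submodule.mem_span_pair.mpr ⟨c, 0, ?_⟩
      rw [hpnone, zero_smul, add_zero, hac, ha, zero_smul, zero_add]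
    · refine ⟨L (some (a⁻¹ * c)), ⟨some (a⁻¹ * c), rfl⟩, ?_⟩
      refine Submodule.mem_span_pair.mpr ⟨a, 0, ?_⟩
      rw [hpsome, zero_smul, add_zero, hac, smul_add, smul_smul,
        mul_inv_cancel_left₀ ha]
end
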